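/- arXiv:1905.02367 — 10 statements merged into one kernel-verified Lean document; each statement's English description precedes it below -/
import Mathlib

section
/- Let V be a finite ground set, c a cost function on V, K > 0 a real number, and α ≥ 1 an integer. If S ⊆ V satisfies c(e) ≤ K for every e ∈ S and c(S) ≤ αK, then S can be partitioned into at most 2α − 1 pairwise disjoint subsets, each of total cost at most K. -/
open Finset

private lemma exists_maximal_subset {V : Type*} [DecidableEq V]
    (c : V → ℝ) (K : ℝ) (hK : 0 ≤ K) (S : Finset V) :
    ∃ A ⊆ S, (∑ e ∈ A, c e ≤ K) ∧ ∀ e ∈ S \ A, K < (∑ x ∈ A, c x) + c e := by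
  classical
  set F := S.powerset.filter (fun T => ∑ e ∈ T, c e ≤ K) with hF
  have hne : F.Nonempty := ⟨∅, by simp [hF, hK]⟩
  obtain ⟨A, hAF, hmax⟩ := F.exists_max_image Finset.card hne
  simp only [hF, mem_filter, mem_powerset] at hAF
  refine ⟨A, hAF.1, hAF.2, ?_⟩
  intro e he
  rw [mem_sdiff] at he
  by_contra hle
  push_neg at hle
  have hins : insert e A ∈ F := by
    simp only [hF, mem_filter, mem_powerset]
    exact ⟨insert_subset he.1 hAF.1, by rwa [Finset.sum_insert he.2, add_comm]⟩
  have := hmax _ hins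
  rw [Finset.card_insert_of_notMem he.2] at this
  omega

private lemma aux_partition {V : Type*} [DecidableEq V]
    (c : V → ℝ) (hc : ∀ e, 0 < c e) (K : ℝ) (hK : 0 < K) :
    ∀ α : ℕ, 1 ≤ α → ∀ S : Finset V, (∀ e ∈ S, c e ≤ K) →
      (∑ e ∈ S, c e ≤ (α : ℝ) * K) →
      ∃ P : Fin (2 * α - 1) → Finset V,
        (∀ i j, i ≠ j → Disjoint (P i) (P j)) ∧
        S = Finset.univ.biUnion P ∧
        (∀ i, ∑ e ∈ P i, c e ≤ K) := by
  intro α hα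
  induction α, hα using Nat.le_induction with
  | base =>
    intro S hitem hcost
    refine ⟨fun _ => S, ?_, ?_, ?_⟩
    · intro i j hij
      have hi := i.isLt
      have hj := j.isLt
      exact absurd (Fin.ext (by omega)) hij
    · simp
    · intro _; simpa using hcost
  | succ α hα ih =>
    intro S hitem hcost
    obtain ⟨A, hAS, hAK, hAmax⟩ := exists_maximal_subset c K hK.le S
    obtain ⟨B, hBS', hBK, hBmax⟩ := exists_maximal_subset c K hK.le (S \ A)
    set R := (S \ A) \ B with hRdef
    have hRS : R ⊆ S := sdiff_subset.trans sdiff_subset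
    have sumS' : ∑ e ∈ S \ A, c e = ∑ e ∈ S, c e - ∑ e ∈ A, c e :=
      Finset.sum_sdiff_eq_sub hAS
    have sumR : ∑ e ∈ R, c e = ∑ e ∈ S, c e - ∑ e ∈ A, c e - ∑ e ∈ B, c e := by
      rw [hRdef, Finset.sum_sdiff_eq_sub hBS', sumS']
    have hRcost : ∑ e ∈ R, c e ≤ (α : ℝ) * K := by
      rcases R.eq_empty_or_nonempty with h | h
      · rw [h]; simp; positivity
      · obtain ⟨f, hf⟩ := h
        have hfS' : f ∈ S \ A := sdiff_subset hf
        have hBne : B.Nonempty := by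
          by_contra hB
          rw [not_nonempty_iff_eq_empty] at hB
          have hK' := hBmax f hf
          rw [hB] at hK'
          simp only [Finset.sum_empty, zero_add] at hK'
          exact absurd (hitem f (hRS hf)) (not_le.mpr hK')
        obtain ⟨e, heB⟩ := hBne
        have heS' : e ∈ S \ A := hBS' heB
        have hA' : K < (∑ x ∈ A, c x) + c e := hAmax e heS'
        have hce : c e ≤ ∑ x ∈ B, c x :=
          Finset.single_le_sum (fun x _ => (hc x).le) heB
        have : K < (∑ x ∈ A, c x) + ∑ x ∈ B, c x := by linarith
        rw [sumR]
        push_cast at hcost ⊢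
        linarith
    obtain ⟨P', hd', hu', hk'⟩ := ih R (fun e he => hitem e (hRS he)) hRcost
    have hPR : ∀ k, P' k ⊆ R := by
      intro k; rw [hu']; exact subset_biUnion_of_mem P' (mem_univ k)
    have hAB : Disjoint A B := disjoint_sdiff.mono_right hBS'
    have hAP : ∀ k, Disjoint A (P' k) :=
      fun k => disjoint_sdiff.mono_right ((hPR k).trans sdiff_subset)
    have hBP : ∀ k, Disjoint B (P' k) :=
      fun k => disjoint_sdiff.mono_right (hPR k)
    refine ⟨fun i => if h : (i : ℕ) < 2 * α - 1 then P' ⟨i, h⟩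
        else if (i : ℕ) = 2 * α - 1 then A else B, ?_, ?_, ?_⟩
    · intro i j hij
      have hvij : (i : ℕ) ≠ (j : ℕ) := fun h => hij (Fin.ext h)
      have hi2 : (i : ℕ) < 2 * (α + 1) - 1 := i.isLt
      have hj2 : (j : ℕ) < 2 * (α + 1) - 1 := j.isLt
      dsimp only
      split_ifs with h1 h2 h3 h4 h5 h6 h7 h8
      all_goals first
        | exact hd' _ _ (Fin.ne_of_val_ne hvij)
        | exact hAB
        | exact hAB.symm
        | exact hAP _
        | exact (hAP _).symm
        | exact hBP _
        | exact (hBP _).symm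
        | (exfalso; omega)
    · have hSsplit : S = A ∪ B ∪ R := by
        rw [hRdef, union_assoc, Finset.union_sdiff_of_subset hBS',
          Finset.union_sdiff_of_subset hAS]
      rw [hSsplit]
      ext x
      simp only [mem_biUnion, mem_univ, true_and, mem_union]
      constructor
      · rintro ((hx | hx) | hx)
        · refine ⟨⟨2 * α - 1, by omega⟩, ?_⟩
          rw [dif_neg (by simp), if_pos rfl]
          exact hx
        · refine ⟨⟨2 * α, by omega⟩, ?_⟩
          rw [dif_neg (by simp), if_neg (by simp; omega)]
          exact hx
        · rw [hu'] at hx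
          obtain ⟨k, _, hk⟩ := mem_biUnion.mp hx
          refine ⟨⟨(k : ℕ), by omega⟩, ?_⟩
          rw [dif_pos k.isLt]
          simpa using hk
      · rintro ⟨i, hx⟩
        split_ifs at hx with h1 h2
        · right; rw [hu']; exact mem_biUnion.mpr ⟨_, mem_univ _, hx⟩
        · left; left; exact hx
        · left; right; exact hx
    · intro i
      dsimp only
      split_ifs with h1 h2
      · exact hk' _
      · exact hAK
      · exact hBK

/-- If every element of `S` has cost at most `K` and the total cost of `S`
is at most `α·K` (with `α ≥ 1` an integer), then `S` can be partitioned into at most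
`2α − 1` pairwise disjoint subsets, each of total cost at most `K`. -/
theorem partition_into_low_cost_parts {V : Type*} [DecidableEq V] [Fintype V]
    (c : V → ℝ) (hc : ∀ e, 0 < c e)
    (K : ℝ) (hK : 0 < K) (α : ℕ) (hα : 1 ≤ α)
    (S : Finset V)
    (hitem : ∀ e ∈ S, c e ≤ K)
    (hcost : ∑ e ∈ S, c e ≤ (α : ℝ) * K) :
    ∃ P : Fin (2 * α - 1) → Finset V,
      (∀ i j, i ≠ j → Disjoint (P i) (P j)) ∧
      S = Finset.univ.biUnion P ∧
      (∀ i, ∑ e ∈ P i, c e ≤ K) :=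
  aux_partition c hc K hK α hα S hitem hcost
end

section
/- Let V be a finite ground set, f : 2^V → ℝ a monotone, nonnegative, submodular set function, c a cost function on V, K > 0 a real number, and α ≥ 1 an integer. If S ⊆ V satisfies c(e) ≤ K for every e ∈ S and c(S) ≤ αK, then there exists T ⊆ S with c(T) ≤ K and f(T) ≥ f(S)/(2α − 1). -/
/-!
Split `S` into at most `2α - 1` parts of cost at most `K`. If `c(S) > (α - 1)K`, take a minimal
`T ⊆ S` with `c(T) ≥ c(S) - (α - 1)K`; dropping any `e ∈ T` brings the cost below that bound,
which is at most `K`, so `{e}` and `T \ {e}` are two parts, and `S \ T` costs at most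
`(α - 1)K`, so induction on `α` splits it. Submodularity with `f ∅ ≥ 0` makes `f` subadditive:
`f(S)` is at most the sum of the values of the parts, and the most valuable part gets at least
the average.
-/

open Finset

theorem Finset.exists_subset_le_sum_and_sum_erase_lt {V M : Type*} [DecidableEq V]
    [AddCommMonoid M] [LinearOrder M] (c : V → M) {t : M} (ht : 0 < t) (S : Finset V)
    (hS : t ≤ ∑ e ∈ S, c e) :
    ∃ T ⊆ S, ∃ e ∈ T, t ≤ ∑ x ∈ T, c x ∧ ∑ x ∈ T.erase e, c x < t := by
  induction S using Finset.strongInduction with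
  | H S ih =>
    by_cases h : ∃ e ∈ S, t ≤ ∑ x ∈ S.erase e, c x
    · obtain ⟨e, he, hle⟩ := h
      obtain ⟨T, hT, hT'⟩ := ih _ (erase_ssubset he) hle
      exact ⟨T, hT.trans (erase_subset e S), hT'⟩
    · push Not at h
      obtain ⟨e, he⟩ : S.Nonempty := by
        rw [nonempty_iff_ne_empty]
        rintro rfl
        exact (ht.trans_le hS).ne rfl
      exact ⟨S, subset_rfl, e, he, hS, h e he⟩

section Submodular

variable {V : Type*} [DecidableEq V]

def IsSubmodular (f : Finset V → ℝ) : Prop :=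
  ∀ S T : Finset V, S ⊆ T → ∀ e : V, f (S ∪ {e}) - f S ≥ f (T ∪ {e}) - f T

variable {f : Finset V → ℝ}

theorem IsSubmodular.union_add_le (hf : IsSubmodular f) (B : Finset V) {C D : Finset V}
    (hCD : C ⊆ D) : f (D ∪ B) + f C ≤ f (C ∪ B) + f D := by
  induction B using Finset.induction_on generalizing C D with
  | empty => simp [add_comm]
  | insert e B _ ih =>
    have hB := ih (union_subset_union_left hCD : C ∪ {e} ⊆ D ∪ {e})
    have he := hf C D hCD e
    rw [insert_eq, ← union_assoc, ← union_assoc]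
    linarith

theorem IsSubmodular.union_le_add (hf : IsSubmodular f) (h₀ : 0 ≤ f ∅) (A B : Finset V) :
    f (A ∪ B) ≤ f A + f B := by
  have := hf.union_add_le B (empty_subset A)
  rw [empty_union] at this
  linarith

theorem IsSubmodular.sup_le_sum (hf : IsSubmodular f) (h₀ : 0 ≤ f ∅)
    {P : Finset (Finset V)} (hP : P.Nonempty) : f (P.sup id) ≤ ∑ T ∈ P, f T := by
  induction hP using Finset.Nonempty.cons_induction with
  | singleton T => simp
  | cons T P hT _ ih =>
    rw [sup_cons, sum_cons]
    exact (hf.union_le_add h₀ T _).trans (by simpa using ih)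

end Submodular

theorem exists_cover_of_sum_le {V : Type*} [DecidableEq V] (c : V → ℝ) {K : ℝ} {α : ℕ}
    (hα : 1 ≤ α) {S : Finset V} (hitem : ∀ e ∈ S, c e ≤ K) (hcost : ∑ e ∈ S, c e ≤ α * K) :
    ∃ P : Finset (Finset V), P.Nonempty ∧ #P < 2 * α ∧ (∀ T ∈ P, ∑ e ∈ T, c e ≤ K) ∧
      P.sup id = S := by
  induction α, hα using Nat.le_induction generalizing S with
  | base => exact ⟨{S}, singleton_nonempty S, by simp, by simpa using hcost, by simp⟩
  | succ n _ ih =>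
    by_cases hle : ∑ e ∈ S, c e ≤ n * K
    · obtain ⟨P, hP, hPcard, hPcost, hPS⟩ := ih hitem hle
      exact ⟨P, hP, by omega, hPcost, hPS⟩
    push Not at hle
    push_cast at hcost
    have hK : 0 < K := by linarith
    obtain ⟨T, hTS, e, he, hT, hTe⟩ :=
      exists_subset_le_sum_and_sum_erase_lt c (sub_pos.2 hle) S (sub_le_self _ (by positivity))
    have hrest : ∑ x ∈ S \ T, c x ≤ n * K := by
      linarith [sum_sdiff hTS (f := c)]
    obtain ⟨P, hP, hPcard, hPcost, hPS⟩ :=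
      ih (fun x hx ↦ hitem x (sdiff_subset hx)) hrest
    refine ⟨insert {e} (insert (T.erase e) P), insert_nonempty _ _, ?_, ?_, ?_⟩
    · have := card_insert_le {e} (insert (T.erase e) P)
      have := card_insert_le (T.erase e) P
      omega
    · simp only [mem_insert, forall_eq_or_imp, sum_singleton]
      exact ⟨hitem e (hTS he), by linarith, hPcost⟩
    · rw [sup_insert, sup_insert, hPS, id, id, sup_eq_union, sup_eq_union, ← union_assoc,
        ← insert_eq, insert_erase he, union_sdiff_of_subset hTS]

theorem exists_low_cost_subset_with_large_value_general {V : Type*} [DecidableEq V]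
    (f : Finset V → ℝ)
    (hnonneg : ∀ S : Finset V, 0 ≤ f S)
    (hsub : ∀ S T : Finset V, S ⊆ T → ∀ e : V,
      f (S ∪ {e}) - f S ≥ f (T ∪ {e}) - f T)
    (c : V → ℝ)
    (K : ℝ) (α : ℕ) (hα : 1 ≤ α)
    (S : Finset V)
    (hitem : ∀ e ∈ S, c e ≤ K)
    (hcost : ∑ e ∈ S, c e ≤ (α : ℝ) * K) :
    ∃ T ⊆ S, ∑ e ∈ T, c e ≤ K ∧ f T ≥ f S / (2 * (α : ℝ) - 1) := by
  obtain ⟨P, hP, hPcard, hPcost, rfl⟩ := exists_cover_of_sum_le c hα hitem hcost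
  have hcard : (#P : ℝ) ≤ 2 * α - 1 := by
    have : (#P : ℝ) + 1 ≤ 2 * α := by exact_mod_cast Nat.succ_le_of_lt hPcard
    linarith
  obtain ⟨T, hT, hmax⟩ := exists_max_image P f hP
  refine ⟨T, le_sup (f := id) hT, hPcost T hT, ?_⟩
  rw [ge_iff_le, div_le_iff₀ (hcard.trans_lt' (by positivity))]
  calc f (P.sup id) ≤ ∑ T ∈ P, f T := IsSubmodular.sup_le_sum hsub (hnonneg ∅) hP
    _ ≤ #P * f T := by simpa using sum_le_card_nsmul P f (f T) hmax
    _ ≤ f T * (2 * α - 1) := by rw [mul_comm]; gcongr; exact hnonneg T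

/-- If `f` is monotone, nonnegative and submodular, every element of `S` has
cost at most `K`, and the total cost of `S` is at most `α·K` (with `α ≥ 1` an integer),
then there exists `T ⊆ S` with cost at most `K` and `f(T) ≥ f(S) / (2α − 1)`. -/
theorem exists_low_cost_subset_with_large_value {V : Type*} [DecidableEq V] [Fintype V]
    (f : Finset V → ℝ)
    (hmono : ∀ S T : Finset V, S ⊆ T → f S ≤ f T)
    (hnonneg : ∀ S : Finset V, 0 ≤ f S)
    (hsub : ∀ S T : Finset V, S ⊆ T → ∀ e : V,
      f (S ∪ {e}) - f S ≥ f (T ∪ {e}) - f T)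
    (c : V → ℝ) (hc : ∀ e, 0 < c e)
    (K : ℝ) (hK : 0 < K) (α : ℕ) (hα : 1 ≤ α)
    (S : Finset V)
    (hitem : ∀ e ∈ S, c e ≤ K)
    (hcost : ∑ e ∈ S, c e ≤ (α : ℝ) * K) :
    ∃ T ⊆ S, ∑ e ∈ T, c e ≤ K ∧ f T ≥ f S / (2 * (α : ℝ) - 1) :=
  exists_low_cost_subset_with_large_value_general f hnonneg hsub c K α hα S hitem hcost
end

section
/- Let V be a finite ground set, f : 2^V → ℝ a monotone, nonnegative, submodular set function, c a cost function on V, τ > 0, and ℓ ≥ 1 an integer. Let A_0, A_1, …, A_ℓ ⊆ V with A_0 = ∅, and for each 0 ≤ j ≤ ℓ let E_j ⊆ A_j (so E_0 = ∅). Assume that for every 1 ≤ i ≤ ℓ it holds that f(A_{i−1} ∪ E_i) − f(A_{i−1}) ≤ (τ/2^{i−1})·c(E_i). Then for every 1 ≤ i ≤ ℓ, f((⋃_{j=0}^{i−1}(A_j ∖ E_j)) ∪ E_i) − f(⋃_{j=0}^{i−1}(A_j ∖ E_j)) ≤ Σ_{j=1}^{i} (τ/2^{j−1})·c(E_j). 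-/
/-- Submodularity for set marginals, lifted from the singleton version. -/
lemma submod_sets {V : Type*} [DecidableEq V]
    (f : Finset V → ℝ)
    (hsub : ∀ S T : Finset V, S ⊆ T → ∀ e : V,
      f (S ∪ {e}) - f S ≥ f (T ∪ {e}) - f T) :
    ∀ S T' T : Finset V, T' ⊆ T → f (T ∪ S) - f T ≤ f (T' ∪ S) - f T' := by
  intro S
  induction S using Finset.induction_on with
  | empty => intro T' T h; simp
  | @insert e S' he ih =>
    intro T' T h
    have h1 : T ∪ insert e S' = (T ∪ S') ∪ {e} := by
      ext x; simp [Finset.mem_insert, Finset.mem_union]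
    have h2 : T' ∪ insert e S' = (T' ∪ S') ∪ {e} := by
      ext x; simp [Finset.mem_insert, Finset.mem_union]
    have hs := hsub (T' ∪ S') (T ∪ S') (Finset.union_subset_union h (le_refl S')) e
    have := ih T' T h
    rw [h1, h2]
    linarith

/-- Chain recursion with threshold-weighted costs. Given buckets
`A_0 = ∅, A_1, …, A_ℓ`, removed subsets `E_j ⊆ A_j`, and per-partition marginal bounds
`f(A_{i−1} ∪ E_i) − f(A_{i−1}) ≤ (τ/2^{i−1})·c(E_i)`, for every `1 ≤ i ≤ ℓ`,
`f((⋃_{j<i}(A_j∖E_j)) ∪ E_i) − f(⋃_{j<i}(A_j∖E_j)) ≤ Σ_{j=1}^{i} (τ/2^{j−1})·c(E_j)`. -/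
theorem chain_recursion_threshold {V : Type*} [DecidableEq V] [Fintype V]
    (f : Finset V → ℝ)
    (hmono : ∀ S T : Finset V, S ⊆ T → f S ≤ f T)
    (hnonneg : ∀ S : Finset V, 0 ≤ f S)
    (hsub : ∀ S T : Finset V, S ⊆ T → ∀ e : V,
      f (S ∪ {e}) - f S ≥ f (T ∪ {e}) - f T)
    (c : V → ℝ) (hc : ∀ e, 0 < c e)
    (τ : ℝ) (hτ : 0 < τ) (ℓ : ℕ) (hℓ : 1 ≤ ℓ)
    (A E : ℕ → Finset V) (hA0 : A 0 = ∅)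
    (hEsub : ∀ j ≤ ℓ, E j ⊆ A j)
    (hmarg : ∀ i, 1 ≤ i → i ≤ ℓ →
      f (A (i - 1) ∪ E i) - f (A (i - 1)) ≤ τ / 2 ^ (i - 1) * ∑ e ∈ E i, c e) :
    ∀ i, 1 ≤ i → i ≤ ℓ →
      f ((Finset.range i).biUnion (fun j => A j \ E j) ∪ E i) -
          f ((Finset.range i).biUnion (fun j => A j \ E j)) ≤
        ∑ j ∈ Finset.Icc 1 i, τ / 2 ^ (j - 1) * ∑ e ∈ E j, c e := by
  intro i h1
  induction i, h1 using Nat.le_induction with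
  | base =>
    intro h1
    have hm := hmarg 1 le_rfl h1
    rw [hA0] at hm
    have hB1 : ((Finset.range 1).biUnion fun j => A j \ E j) = ∅ := by simp [hA0]
    rw [hB1]
    simpa using hm
  | succ i hi ih =>
    intro hle
    have hile : i ≤ ℓ := le_trans (Nat.le_succ i) hle
    set B : Finset V := (Finset.range i).biUnion (fun j => A j \ E j) with hB
    have hBsucc : (Finset.range (i+1)).biUnion (fun j => A j \ E j) = (A i \ E i) ∪ B := by
      rw [Finset.range_add_one, Finset.biUnion_insert]
    set C : Finset V := (A i \ E i) ∪ B with hC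
    -- C ∪ E i = B ∪ A i ⊇ A i
    have hAiC : A i ⊆ C ∪ E i := by
      intro x hx
      by_cases hxE : x ∈ E i
      · exact Finset.mem_union_right _ hxE
      · exact Finset.mem_union_left _ (Finset.mem_union_left _ (Finset.mem_sdiff.mpr ⟨hx, hxE⟩))
    -- step 1: monotonicity
    have step1 : f (C ∪ E (i+1)) ≤ f (C ∪ E i ∪ E (i+1)) := by
      apply hmono
      exact Finset.union_subset_union (Finset.subset_union_left) (le_refl _)
    -- step 2: submod on E (i+1) from A i
    have step2 : f ((C ∪ E i) ∪ E (i+1)) - f (C ∪ E i) ≤ f (A i ∪ E (i+1)) - f (A i) :=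
      submod_sets f hsub (E (i+1)) (A i) (C ∪ E i) hAiC
    have hm := hmarg (i+1) (Nat.le_add_left 1 i) hle
    simp only [Nat.add_sub_cancel] at hm
    -- step 3: submod on E i from B
    have step3 : f (C ∪ E i) - f C ≤ f (B ∪ E i) - f B :=
      submod_sets f hsub (E i) B C (Finset.subset_union_right)
    have hIH := ih hile
    have hsum : ∑ j ∈ Finset.Icc 1 (i+1), τ / 2 ^ (j - 1) * ∑ e ∈ E j, c e
        = (∑ j ∈ Finset.Icc 1 i, τ / 2 ^ (j - 1) * ∑ e ∈ E j, c e)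
          + τ / 2 ^ i * ∑ e ∈ E (i+1), c e := by
      rw [Finset.sum_Icc_succ_top (Nat.le_add_left 1 i)]
      simp
    rw [hBsucc, hsum]
    linarith
end

section
/- Let V be a finite ground set, f : 2^V → ℝ a monotone, nonnegative, submodular set function, and ℓ ≥ 1 an integer. Let A_0, A_1, …, A_ℓ ⊆ V with A_0 = ∅, and for each 0 ≤ j ≤ ℓ let E_j ⊆ A_j (so E_0 = ∅). Then f((⋃_{j=0}^{ℓ−1}(A_j ∖ E_j)) ∪ E_ℓ) − f(⋃_{j=0}^{ℓ−1}(A_j ∖ E_j)) ≤ Σ_{j=1}^{ℓ} ( f(A_{j−1} ∪ E_j) − f(A_{j−1}) ). -/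
/-- Set version of submodularity: marginals shrink as the base grows. -/
lemma marg_mono {V : Type*} [DecidableEq V]
    (f : Finset V → ℝ)
    (hsub : ∀ S T : Finset V, S ⊆ T → ∀ e : V,
      f (S ∪ {e}) - f S ≥ f (T ∪ {e}) - f T)
    (S T : Finset V) (hST : S ⊆ T) (X : Finset V) :
    f (T ∪ X) - f T ≤ f (S ∪ X) - f S := by
  induction X using Finset.induction_on with
  | empty => simp
  | @insert x X hx ih =>
    have h1 : f ((T ∪ X) ∪ {x}) - f (T ∪ X) ≤ f ((S ∪ X) ∪ {x}) - f (S ∪ X) :=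
      hsub (S ∪ X) (T ∪ X) (Finset.union_subset_union_left hST) x
    have e1 : T ∪ insert x X = (T ∪ X) ∪ {x} := by
      ext a; simp [or_comm, or_left_comm, or_assoc]
    have e2 : S ∪ insert x X = (S ∪ X) ∪ {x} := by
      ext a; simp [or_comm, or_left_comm, or_assoc]
    rw [e1, e2]
    linarith

/-- General chain inequality. Given buckets `A_0 = ∅, A_1, …, A_ℓ` and
removed subsets `E_j ⊆ A_j`, for a monotone, nonnegative, submodular `f`,
`f((⋃_{j<ℓ}(A_j∖E_j)) ∪ E_ℓ) − f(⋃_{j<ℓ}(A_j∖E_j))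
  ≤ Σ_{j=1}^{ℓ} (f(A_{j−1} ∪ E_j) − f(A_{j−1}))`. -/
theorem chain_inequality_general {V : Type*} [DecidableEq V] [Fintype V]
    (f : Finset V → ℝ)
    (hmono : ∀ S T : Finset V, S ⊆ T → f S ≤ f T)
    (hnonneg : ∀ S : Finset V, 0 ≤ f S)
    (hsub : ∀ S T : Finset V, S ⊆ T → ∀ e : V,
      f (S ∪ {e}) - f S ≥ f (T ∪ {e}) - f T)
    (ℓ : ℕ) (hℓ : 1 ≤ ℓ)
    (A E : ℕ → Finset V) (hA0 : A 0 = ∅)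
    (hEsub : ∀ j ≤ ℓ, E j ⊆ A j) :
    f ((Finset.range ℓ).biUnion (fun j => A j \ E j) ∪ E ℓ) -
        f ((Finset.range ℓ).biUnion (fun j => A j \ E j)) ≤
      ∑ j ∈ Finset.Icc 1 ℓ, (f (A (j - 1) ∪ E j) - f (A (j - 1))) := by
  induction ℓ, hℓ using Nat.le_induction with
  | base =>
    have hB : (Finset.range 1).biUnion (fun j => A j \ E j) = ∅ := by
      simp [hA0]
    simp [hB, hA0]
  | succ n hn ih =>
    have hEn : E n ⊆ A n := hEsub n (by omega)
    set B := (Finset.range n).biUnion (fun j => A j \ E j) with hBdef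
    have hB1 : (Finset.range (n+1)).biUnion (fun j => A j \ E j)
        = B ∪ (A n \ E n) := by
      rw [Finset.range_add_one, Finset.biUnion_insert, Finset.union_comm]
    set B1 := B ∪ (A n \ E n) with hB1def
    -- first split: f(B1 ∪ E(n+1)) - f(B1) ≤ [marg of E(n+1) on B1∪E n] + [marg of E n on B1]
    have hm1 : f (B1 ∪ E (n+1)) ≤ f ((B1 ∪ E n) ∪ E (n+1)) :=
      hmono _ _ (Finset.union_subset_union_left Finset.subset_union_left)
    -- A n ⊆ B1 ∪ E n
    have hAn : A n ⊆ B1 ∪ E n := by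
      intro a ha
      by_cases h : a ∈ E n
      · exact Finset.mem_union_right _ h
      · exact Finset.mem_union_left _ (Finset.mem_union_right _ (Finset.mem_sdiff.2 ⟨ha, h⟩))
    have h1 : f ((B1 ∪ E n) ∪ E (n+1)) - f (B1 ∪ E n)
        ≤ f (A n ∪ E (n+1)) - f (A n) := marg_mono f hsub _ _ hAn _
    have h2 : f (B1 ∪ E n) - f B1 ≤ f (B ∪ E n) - f B :=
      marg_mono f hsub B B1 Finset.subset_union_left _
    have hIH : f (B ∪ E n) - f B ≤ ∑ j ∈ Finset.Icc 1 n, (f (A (j-1) ∪ E j) - f (A (j-1))) :=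
      ih (fun j hj => hEsub j (by omega))
    have hsum : ∑ j ∈ Finset.Icc 1 (n+1), (f (A (j-1) ∪ E j) - f (A (j-1)))
        = (∑ j ∈ Finset.Icc 1 n, (f (A (j-1) ∪ E j) - f (A (j-1))))
          + (f (A n ∪ E (n+1)) - f (A n)) := by
      rw [Finset.sum_Icc_succ_top (by omega)]; norm_num
    rw [hB1, hsum]
    linarith
end

section
/- Let V be a finite ground set, f : 2^V → ℝ a monotone, nonnegative, submodular set function, c a cost function on V, τ > 0, and ℓ ≥ 1 an integer. Let A_0, A_1, …, A_ℓ ⊆ V with A_0 = ∅, and for each 0 ≤ j ≤ ℓ let E_j ⊆ A_j. Assume that for every 1 ≤ i ≤ ℓ it holds that f(A_{i−1} ∪ E_i) − f(A_{i−1}) ≤ (τ/2^{i−1})·c(E_i). Then f(⋃_{j=0}^{ℓ}(A_j ∖ E_j)) ≥ f(A_ℓ) − Σ_{j=1}^{ℓ} (τ/2^{j−1})·c(E_j). -/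
/-- Set version of diminishing returns derived from the element version. -/
lemma set_submod {V : Type*} [DecidableEq V]
    (f : Finset V → ℝ)
    (hsub : ∀ S T : Finset V, S ⊆ T → ∀ e : V,
      f (S ∪ {e}) - f S ≥ f (T ∪ {e}) - f T) :
    ∀ (X S T : Finset V), S ⊆ T → f (T ∪ X) - f T ≤ f (S ∪ X) - f S := by
  intro X
  induction X using Finset.induction_on with
  | empty => intro S T _; simp
  | @insert a X ha ih =>
    intro S T hST
    have h1 : f ((T ∪ X) ∪ {a}) - f (T ∪ X) ≤ f ((S ∪ X) ∪ {a}) - f (S ∪ X) :=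
      hsub (S ∪ X) (T ∪ X) (Finset.union_subset_union hST (subset_refl X)) a
    have h2 := ih S T hST
    have e1 : S ∪ insert a X = (S ∪ X) ∪ {a} := by
      ext x; simp [or_comm, or_assoc, or_left_comm]
    have e2 : T ∪ insert a X = (T ∪ X) ∪ {a} := by
      ext x; simp [or_comm, or_assoc, or_left_comm]
    rw [e1, e2]; linarith

/-- Value of surviving elements. Given buckets `A_0 = ∅, A_1, …, A_ℓ`,
removed subsets `E_j ⊆ A_j`, and per-partition marginal bounds
`f(A_{i−1} ∪ E_i) − f(A_{i−1}) ≤ (τ/2^{i−1})·c(E_i)`, one has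
`f(⋃_{j=0}^{ℓ}(A_j∖E_j)) ≥ f(A_ℓ) − Σ_{j=1}^{ℓ} (τ/2^{j−1})·c(E_j)`. -/
theorem surviving_value_lower_bound {V : Type*} [DecidableEq V] [Fintype V]
    (f : Finset V → ℝ)
    (hmono : ∀ S T : Finset V, S ⊆ T → f S ≤ f T)
    (hnonneg : ∀ S : Finset V, 0 ≤ f S)
    (hsub : ∀ S T : Finset V, S ⊆ T → ∀ e : V,
      f (S ∪ {e}) - f S ≥ f (T ∪ {e}) - f T)
    (c : V → ℝ) (hc : ∀ e, 0 < c e)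
    (τ : ℝ) (hτ : 0 < τ) (ℓ : ℕ) (hℓ : 1 ≤ ℓ)
    (A E : ℕ → Finset V) (hA0 : A 0 = ∅)
    (hEsub : ∀ j ≤ ℓ, E j ⊆ A j)
    (hmarg : ∀ i, 1 ≤ i → i ≤ ℓ →
      f (A (i - 1) ∪ E i) - f (A (i - 1)) ≤ τ / 2 ^ (i - 1) * ∑ e ∈ E i, c e) :
    f ((Finset.range (ℓ + 1)).biUnion (fun j => A j \ E j)) ≥
      f (A ℓ) - ∑ j ∈ Finset.Icc 1 ℓ, τ / 2 ^ (j - 1) * ∑ e ∈ E j, c e := by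
  set U := (Finset.range (ℓ + 1)).biUnion (fun j => A j \ E j) with hU
  set B : ℕ → Finset V := fun n => U ∪ (Finset.Icc 1 n).biUnion E with hB
  -- A n ⊆ B n for n ≤ ℓ
  have hAB : ∀ n, n ≤ ℓ → A n ⊆ B n := by
    intro n hn x hx
    rcases Nat.eq_zero_or_pos n with h0 | h1
    · rw [h0, hA0] at hx; exact absurd hx (Finset.notMem_empty x)
    · by_cases hE : x ∈ E n
      · exact Finset.mem_union_right _ (Finset.mem_biUnion.2 ⟨n, Finset.mem_Icc.2 ⟨h1, le_refl n⟩, hE⟩)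
      · exact Finset.mem_union_left _ (Finset.mem_biUnion.2
          ⟨n, Finset.mem_range.2 (Nat.lt_succ_of_le hn), Finset.mem_sdiff.2 ⟨hx, hE⟩⟩)
  have key : ∀ n, n ≤ ℓ →
      f (B n) ≤ f U + ∑ j ∈ Finset.Icc 1 n, τ / 2 ^ (j - 1) * ∑ e ∈ E j, c e := by
    intro n
    induction n with
    | zero =>
      intro _
      simp [hB]
    | succ n ih =>
      intro hn
      have ihh := ih (Nat.le_of_succ_le hn)
      have hBn : B (n + 1) = B n ∪ E (n + 1) := by
        rw [hB]
        simp only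
        rw [show Finset.Icc 1 (n + 1) = insert (n + 1) (Finset.Icc 1 n) by
          ext x; simp [Finset.mem_Icc]; omega]
        rw [Finset.biUnion_insert]
        ext x; simp [or_comm, or_assoc, or_left_comm]
      have hstep : f (B n ∪ E (n + 1)) - f (B n) ≤ f (A n ∪ E (n + 1)) - f (A n) :=
        set_submod f hsub (E (n + 1)) (A n) (B n) (hAB n (Nat.le_of_succ_le hn))
      have hm := hmarg (n + 1) (Nat.le_add_left 1 n) hn
      simp only [Nat.add_sub_cancel] at hm
      have hsum : ∑ j ∈ Finset.Icc 1 (n + 1), τ / 2 ^ (j - 1) * ∑ e ∈ E j, c e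
          = (∑ j ∈ Finset.Icc 1 n, τ / 2 ^ (j - 1) * ∑ e ∈ E j, c e)
            + τ / 2 ^ n * ∑ e ∈ E (n + 1), c e := by
        rw [show Finset.Icc 1 (n + 1) = insert (n + 1) (Finset.Icc 1 n) by
          ext x; simp [Finset.mem_Icc]; omega]
        rw [Finset.sum_insert (by simp)]
        simp [add_comm]
      rw [hBn, hsum]
      linarith
  have h1 : f (A ℓ) ≤ f (B ℓ) := hmono _ _ (hAB ℓ le_rfl)
  have h2 := key ℓ le_rfl
  linarith
end

section
/- Let V be a finite ground set, f : 2^V → ℝ a nonnegative submodular set function, c a cost function on V, and θ > 0. Let e_1, …, e_k be distinct elements of V, write B_0 = ∅ and B_j = {e_1, …, e_j} for 1 ≤ j ≤ k, and assume f(B_j) − f(B_{j−1}) ≥ θ·c(e_j) for every 1 ≤ j ≤ k. Then every subset T ⊆ B_k satisfies f(T) ≥ θ·c(T). -/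
/-- Bucket property of thresholding algorithms. If distinct elements
`e_1, …, e_k` are added one by one, with `B_j = {e_1, …, e_j}` and each addition gaining
`f(B_j) − f(B_{j−1}) ≥ θ·c(e_j)`, then for a nonnegative submodular `f` every subset
`T ⊆ B_k` satisfies `f(T) ≥ θ·c(T)`. -/
theorem bucket_subset_value {V : Type*} [DecidableEq V] [Fintype V]
    (f : Finset V → ℝ)
    (hnonneg : ∀ S : Finset V, 0 ≤ f S)
    (hsub : ∀ S T : Finset V, S ⊆ T → ∀ e : V,
      f (S ∪ {e}) - f S ≥ f (T ∪ {e}) - f T)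
    (c : V → ℝ) (hc : ∀ e, 0 < c e)
    (θ : ℝ) (hθ : 0 < θ)
    (k : ℕ) (e : ℕ → V)
    (hdist : ∀ i j, 1 ≤ i → i ≤ k → 1 ≤ j → j ≤ k → e i = e j → i = j)
    (B : ℕ → Finset V) (hB : ∀ j ≤ k, B j = (Finset.Icc 1 j).image e)
    (hgain : ∀ j, 1 ≤ j → j ≤ k → f (B j) - f (B (j - 1)) ≥ θ * c (e j)) :
    ∀ T ⊆ B k, f T ≥ θ * ∑ x ∈ T, c x := by
  induction k with
  | zero =>
    intro T hT
    have hB0 : B 0 = ∅ := by simpa using hB 0 le_rfl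
    rw [hB0, Finset.subset_empty] at hT
    subst hT
    simpa using hnonneg ∅
  | succ n ih =>
    have hBn : B n = (Finset.Icc 1 n).image e := hB n (Nat.le_succ n)
    have hBk : B (n + 1) = insert (e (n + 1)) (B n) := by
      rw [hB (n + 1) le_rfl, hBn]
      rw [show Finset.Icc 1 (n + 1) = insert (n + 1) (Finset.Icc 1 n) from
        (Finset.insert_Icc_right_eq_Icc_add_one (Nat.succ_le_succ (Nat.zero_le n))).symm]
      simp [Finset.image_insert]
    have henot : e (n + 1) ∉ B n := by
      rw [hBn]
      intro hmem
      obtain ⟨i, hi, hei⟩ := Finset.mem_image.mp hmem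
      simp only [Finset.mem_Icc] at hi
      have := hdist i (n + 1) hi.1 (le_trans hi.2 (Nat.le_succ n)) (Nat.succ_le_succ (Nat.zero_le n)) le_rfl hei
      omega
    have ih' := ih
      (fun i j h1 h2 h3 h4 => hdist i j h1 (le_trans h2 (Nat.le_succ n)) h3 (le_trans h4 (Nat.le_succ n)))
      (fun j hj => hB j (le_trans hj (Nat.le_succ n)))
      (fun j h1 h2 => hgain j h1 (le_trans h2 (Nat.le_succ n)))
    intro T hT
    by_cases hmem : e (n + 1) ∈ T
    · set T' := T.erase (e (n + 1)) with hT'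
      have hT'sub : T' ⊆ B n := by
        intro x hx
        have hxT := Finset.mem_of_mem_erase hx
        have hxne := Finset.ne_of_mem_erase hx
        have := hT hxT
        rw [hBk, Finset.mem_insert] at this
        tauto
      have hTeq : T' ∪ {e (n + 1)} = T := by
        rw [Finset.union_comm, ← Finset.insert_eq]
        exact Finset.insert_erase hmem
      have hBeq : B n ∪ {e (n + 1)} = B (n + 1) := by
        rw [Finset.union_comm, ← Finset.insert_eq, hBk]
      have hsub' := hsub T' (B n) hT'sub (e (n + 1))
      rw [hTeq, hBeq] at hsub'
      have hgain' : f (B (n + 1)) - f (B n) ≥ θ * c (e (n + 1)) := by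
        simpa using hgain (n + 1) (Nat.succ_le_succ (Nat.zero_le n)) le_rfl
      have hih := ih' T' hT'sub
      have hsum : ∑ x ∈ T, c x = c (e (n + 1)) + ∑ x ∈ T', c x := by
        rw [hT', Finset.sum_erase_eq_sub hmem]; ring
      rw [hsum, mul_add]
      linarith
    · have hTsub : T ⊆ B n := by
        intro x hx
        have := hT hx
        rw [hBk, Finset.mem_insert] at this
        rcases this with h | h
        · exact absurd (h ▸ hx) hmem
        · exact h
      exact ih' T hTsub
end

section
/- Let V be a finite ground set, f : 2^V → ℝ any set function, c a cost function on V, and θ > 0, C > 0, I ≥ 0 reals. Let B_1, …, B_N ⊆ V with N ≥ 1 be sets such that for every 1 ≤ j ≤ N, c(B_j) ≥ C and f(T) ≥ θ·c(T) for every T ⊆ B_j. Let E ⊆ V satisfy Σ_{j=1}^{N} c(B_j ∩ E) ≤ I. Then there exists an index j with f(B_j ∖ E) ≥ θ·(C − I/N). -/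
/-- Averaging lemma for saturated buckets. If each bucket `B_j` has cost
at least `C` and satisfies `f(T) ≥ θ·c(T)` for all `T ⊆ B_j`, and the removed set `E`
has total cost at most `I` inside the buckets, then some bucket satisfies
`f(B_j ∖ E) ≥ θ·(C − I/N)`. -/
theorem saturated_bucket_averaging {V : Type*} [DecidableEq V] [Fintype V]
    (f : Finset V → ℝ)
    (c : V → ℝ) (hc : ∀ e, 0 < c e)
    (θ C I : ℝ) (hθ : 0 < θ) (hC : 0 < C) (hI : 0 ≤ I)
    (N : ℕ) (hN : 1 ≤ N) (B : ℕ → Finset V)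
    (hBc : ∀ j, 1 ≤ j → j ≤ N → C ≤ ∑ e ∈ B j, c e)
    (hBf : ∀ j, 1 ≤ j → j ≤ N → ∀ T ⊆ B j, f T ≥ θ * ∑ e ∈ T, c e)
    (E : Finset V)
    (hE : ∑ j ∈ Finset.Icc 1 N, ∑ e ∈ B j ∩ E, c e ≤ I) :
    ∃ j, 1 ≤ j ∧ j ≤ N ∧ f (B j \ E) ≥ θ * (C - I / (N : ℝ)) := by
  have hNpos : (0 : ℝ) < N := by exact_mod_cast hN
  have hne : (Finset.Icc 1 N).Nonempty := ⟨1, by simp [hN]⟩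
  have hconst : ∑ j ∈ Finset.Icc 1 N, ∑ e ∈ B j ∩ E, c e ≤
      ∑ _j ∈ Finset.Icc 1 N, I / N := by
    have : ∑ _j ∈ Finset.Icc 1 N, I / N = I := by
      rw [Finset.sum_const, Nat.card_Icc]
      simp only [Nat.add_sub_cancel, nsmul_eq_mul]
      field_simp
    rw [this]; exact hE
  obtain ⟨j, hj, hjle⟩ := Finset.exists_le_of_sum_le hne hconst
  rw [Finset.mem_Icc] at hj
  refine ⟨j, hj.1, hj.2, ?_⟩
  have hsplit : ∑ e ∈ B j ∩ E, c e + ∑ e ∈ B j \ E, c e = ∑ e ∈ B j, c e :=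
    Finset.sum_inter_add_sum_sdiff _ _ _
  have h1 : θ * (C - I / N) ≤ θ * ∑ e ∈ B j \ E, c e := by
    apply mul_le_mul_of_nonneg_left _ hθ.le
    have := hBc j hj.1 hj.2
    linarith
  exact le_trans h1 (hBf j hj.1 hj.2 _ (Finset.sdiff_subset))
end

section
/- Let V be a finite ground set, f : 2^V → ℝ a monotone, nonnegative, submodular set function, c a cost function on V, and K, τ > 0. Let O ⊆ V with c(O) ≤ K, let B ⊆ V, let X ⊆ O be such that f(B ∪ {e}) − f(B) ≤ (τ/K)·c(e) for every e ∈ X, and let Y = O ∖ X. Then f(Y) ≥ f(O) − f(B) − τ. -/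
private lemma submod_diff {V : Type*} [DecidableEq V]
    (f : Finset V → ℝ)
    (hsub : ∀ S T : Finset V, S ⊆ T → ∀ e : V,
      f (S ∪ {e}) - f S ≥ f (T ∪ {e}) - f T)
    (A : Finset V) : ∀ S T : Finset V, S ⊆ T →
      f (T ∪ A) - f T ≤ f (S ∪ A) - f S := by
  induction A using Finset.induction_on with
  | empty => intro S T _; simp
  | @insert a A ha ih =>
    intro S T hST
    have h1 := hsub (S ∪ A) (T ∪ A) (Finset.union_subset_union_left hST) a
    have h2 := ih S T hST
    have e1 : T ∪ insert a A = (T ∪ A) ∪ {a} := by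
      ext x; simp [Finset.mem_insert, Finset.mem_union]
    have e2 : S ∪ insert a A = (S ∪ A) ∪ {a} := by
      ext x; simp [Finset.mem_insert, Finset.mem_union]
    rw [e1, e2]; linarith

private lemma submod_sum {V : Type*} [DecidableEq V]
    (f : Finset V → ℝ)
    (hsub : ∀ S T : Finset V, S ⊆ T → ∀ e : V,
      f (S ∪ {e}) - f S ≥ f (T ∪ {e}) - f T)
    (B : Finset V) : ∀ X : Finset V,
      f (B ∪ X) - f B ≤ ∑ e ∈ X, (f (B ∪ {e}) - f B) := by
  intro X
  induction X using Finset.induction_on with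
  | empty => simp
  | @insert a A ha ih =>
    have h1 : f ((B ∪ A) ∪ {a}) - f (B ∪ A) ≤ f (B ∪ {a}) - f B :=
      submod_diff f hsub {a} B (B ∪ A) Finset.subset_union_left
    have e1 : B ∪ insert a A = (B ∪ A) ∪ {a} := by
      ext x; simp [Finset.mem_insert, Finset.mem_union]
    rw [Finset.sum_insert ha, e1]
    linarith

/-- Single-knapsack last-bucket lemma. If `O` has cost at most `K`, and
`X ⊆ O` consists of elements with marginal gain with respect to `B` at most
`(τ/K)·c(e)`, then `Y = O ∖ X` satisfies `f(Y) ≥ f(O) − f(B) − τ`. -/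
theorem last_bucket_residual_value {V : Type*} [DecidableEq V] [Fintype V]
    (f : Finset V → ℝ)
    (hmono : ∀ S T : Finset V, S ⊆ T → f S ≤ f T)
    (hnonneg : ∀ S : Finset V, 0 ≤ f S)
    (hsub : ∀ S T : Finset V, S ⊆ T → ∀ e : V,
      f (S ∪ {e}) - f S ≥ f (T ∪ {e}) - f T)
    (c : V → ℝ) (hc : ∀ e, 0 < c e)
    (K τ : ℝ) (hK : 0 < K) (hτ : 0 < τ)
    (O B X : Finset V)
    (hO : ∑ e ∈ O, c e ≤ K)
    (hX : X ⊆ O)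
    (hXe : ∀ e ∈ X, f (B ∪ {e}) - f B ≤ τ / K * c e) :
    f (O \ X) ≥ f O - f B - τ := by
  set Y := O \ X with hY
  -- f(O) ≤ f(Y ∪ B ∪ X)
  have hOsub : O ⊆ (Y ∪ B) ∪ X := by
    intro x hx
    by_cases hxX : x ∈ X
    · exact Finset.mem_union_right _ hxX
    · exact Finset.mem_union_left _ (Finset.mem_union_left _ (Finset.mem_sdiff.mpr ⟨hx, hxX⟩))
  have h1 : f O ≤ f ((Y ∪ B) ∪ X) := hmono _ _ hOsub
  -- f((Y∪B)∪X) - f(Y∪B) ≤ f(B∪X) - f(B)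
  have h2 : f ((Y ∪ B) ∪ X) - f (Y ∪ B) ≤ f (B ∪ X) - f B :=
    submod_diff f hsub X B (Y ∪ B) Finset.subset_union_right
  -- f(Y∪B) - f(Y) ≤ f(B) - f(∅) ≤ f(B)
  have h3 : f (Y ∪ B) - f Y ≤ f (∅ ∪ B) - f ∅ :=
    submod_diff f hsub B ∅ Y (Finset.empty_subset Y)
  have h3' : f (Y ∪ B) - f Y ≤ f B := by
    have := hnonneg (∅ : Finset V)
    have he : (∅ : Finset V) ∪ B = B := Finset.empty_union B
    rw [he] at h3; linarith
  -- f(B∪X) - f(B) ≤ τ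
  have h4 : f (B ∪ X) - f B ≤ ∑ e ∈ X, (f (B ∪ {e}) - f B) := submod_sum f hsub B X
  have h5 : ∑ e ∈ X, (f (B ∪ {e}) - f B) ≤ ∑ e ∈ X, τ / K * c e :=
    Finset.sum_le_sum hXe
  have h6 : ∑ e ∈ X, τ / K * c e = τ / K * ∑ e ∈ X, c e := by
    rw [Finset.mul_sum]
  have h7 : ∑ e ∈ X, c e ≤ K := by
    refine le_trans ?_ hO
    exact Finset.sum_le_sum_of_subset_of_nonneg hX (fun i _ _ => (hc i).le)
  have h8 : τ / K * ∑ e ∈ X, c e ≤ τ := by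
    have hτK : 0 < τ / K := div_pos hτ hK
    calc τ / K * ∑ e ∈ X, c e ≤ τ / K * K := by
          exact mul_le_mul_of_nonneg_left h7 hτK.le
      _ = τ := by field_simp
  linarith
end

section
/- Let η ∈ [0, 1) and F ≥ 0 be real numbers, and set τ = F/(13 − 11η). Then for every real number b, max{ (1/11)·(1 − 1/e)·(b − ητ), (1 − 1/e)·(F − b − τ) } ≥ ((1 − 1/e)·(1 − η)/(13 − 11η))·F, and moreover (1 − 1/e)·(1 − η)·τ = ((1 − 1/e)·(1 − η)/(13 − 11η))·F, where e denotes Euler's number. -/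
/-- Balancing for the cost-`M` robust algorithm. With `η ∈ [0,1)`,
`F ≥ 0`, and `τ = F/(13 − 11η)`: for every real `b`,
`max{(1/11)(1−1/e)(b−ητ), (1−1/e)(F−b−τ)} ≥ ((1−1/e)(1−η)/(13−11η))·F`, and
`(1−1/e)(1−η)·τ = ((1−1/e)(1−η)/(13−11η))·F`. -/
theorem balancing_cost_robust (η F τ : ℝ) (hη0 : 0 ≤ η) (hη1 : η < 1) (hF : 0 ≤ F)
    (hτ : τ = F / (13 - 11 * η)) :
    (∀ b : ℝ,
      max ((1 / 11) * (1 - 1 / Real.exp 1) * (b - η * τ))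
          ((1 - 1 / Real.exp 1) * (F - b - τ)) ≥
        (1 - 1 / Real.exp 1) * (1 - η) / (13 - 11 * η) * F) ∧
    (1 - 1 / Real.exp 1) * (1 - η) * τ =
      (1 - 1 / Real.exp 1) * (1 - η) / (13 - 11 * η) * F := by
  have hD : (0:ℝ) < 13 - 11 * η := by linarith
  have hc : (0:ℝ) ≤ 1 - 1 / Real.exp 1 := by
    have h1 : (1:ℝ) ≤ Real.exp 1 := by
      have := Real.add_one_le_exp (1:ℝ); linarith
    have : 1 / Real.exp 1 ≤ 1 := by
      rw [div_le_one (by positivity)]; exact h1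
    linarith
  have hτ' : τ * (13 - 11 * η) = F := by
    rw [hτ]; field_simp
  constructor
  · intro b
    have heq : (1 - 1 / Real.exp 1) * (1 - η) / (13 - 11 * η) * F
        = (1 - 1 / Real.exp 1) * ((1 - η) * τ) := by
      rw [hτ]; field_simp
    rcases le_total b ((11 - 10 * η) * τ) with h | h
    · refine le_max_of_le_right ?_
      have key : F - b - τ ≥ (1 - η) * τ := by nlinarith
      rw [heq]; nlinarith
    · refine le_max_of_le_left ?_
      have key : b - η * τ ≥ 11 * ((1 - η) * τ) := by nlinarith
      rw [heq]; nlinarith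
  · rw [hτ]; field_simp
end

section
/- Let V be a finite ground set, f : 2^V → ℝ any set function, c a cost function on V, i ≥ 0 an integer, and τ, w, K, M > 0 reals. Let B_1, …, B_N ⊆ V with N ≥ 1 and N ≥ wK/2^{i+1}, such that for every 1 ≤ j ≤ N, c(B_j) ≥ 2^i and f(T) ≥ (τ/2^i)·c(T) for every T ⊆ B_j. Let E ⊆ V satisfy Σ_{j=1}^{N} c(B_j ∩ E) ≤ M. Then there exists an index j with f(B_j ∖ E) ≥ (1 − 4M/(wK))·τ. -/
/-- Saturated-bucket lemma for removals of total cost `M`. If there are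
`N ≥ wK/2^{i+1}` buckets, each of cost at least `2^i` and with `f(T) ≥ (τ/2^i)·c(T)`
for all subsets `T`, and the removed set `E` has total cost at most `M` inside the
buckets, then some bucket satisfies `f(B_j ∖ E) ≥ (1 − 4M/(wK))·τ`. -/
theorem saturated_bucket_cost_removals {V : Type*} [DecidableEq V] [Fintype V]
    (f : Finset V → ℝ)
    (c : V → ℝ) (hc : ∀ e, 0 < c e)
    (i : ℕ) (τ w K M : ℝ) (hτ : 0 < τ) (hw : 0 < w) (hK : 0 < K) (hM : 0 < M)
    (N : ℕ) (hN : 1 ≤ N) (hNlb : (N : ℝ) ≥ w * K / 2 ^ (i + 1))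
    (B : ℕ → Finset V)
    (hBc : ∀ j, 1 ≤ j → j ≤ N → (2 : ℝ) ^ i ≤ ∑ e ∈ B j, c e)
    (hBf : ∀ j, 1 ≤ j → j ≤ N → ∀ T ⊆ B j, f T ≥ τ / 2 ^ i * ∑ e ∈ T, c e)
    (E : Finset V)
    (hE : ∑ j ∈ Finset.Icc 1 N, ∑ e ∈ B j ∩ E, c e ≤ M) :
    ∃ j, 1 ≤ j ∧ j ≤ N ∧ f (B j \ E) ≥ (1 - 4 * M / (w * K)) * τ := by
  have hne : (Finset.Icc 1 N).Nonempty := ⟨1, by simp [hN]⟩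
  obtain ⟨j, hj, hjmin⟩ :=
    Finset.exists_min_image (Finset.Icc 1 N) (fun j => ∑ e ∈ B j ∩ E, c e) hne
  simp only [Finset.mem_Icc] at hj
  refine ⟨j, hj.1, hj.2, ?_⟩
  have hNpos : (0 : ℝ) < N := by exact_mod_cast hN
  -- min times N ≤ total sum ≤ M
  have hmin : (N : ℝ) * (∑ e ∈ B j ∩ E, c e) ≤ M := by
    calc (N : ℝ) * (∑ e ∈ B j ∩ E, c e)
        = ∑ _k ∈ Finset.Icc 1 N, (∑ e ∈ B j ∩ E, c e) := by
          rw [Finset.sum_const, Nat.card_Icc]; simp [nsmul_eq_mul]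
      _ ≤ ∑ k ∈ Finset.Icc 1 N, ∑ e ∈ B k ∩ E, c e := by
          apply Finset.sum_le_sum
          intro k hk
          exact hjmin k hk
      _ ≤ M := hE
  have hIE : ∑ e ∈ B j ∩ E, c e ≤ M / N := by
    rw [le_div_iff₀ hNpos]; linarith [hmin]
  -- split sum
  have hsplit : (∑ e ∈ B j \ E, c e) = (∑ e ∈ B j, c e) - ∑ e ∈ B j ∩ E, c e := by
    have h1 : B j \ E = B j \ (B j ∩ E) := (Finset.sdiff_inter_self_left (B j) E).symm
    rw [h1]
    exact Finset.sum_sdiff_eq_sub Finset.inter_subset_left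
  have hcost : (2 : ℝ) ^ i - M / N ≤ ∑ e ∈ B j \ E, c e := by
    rw [hsplit]
    have := hBc j hj.1 hj.2
    linarith
  have hf := hBf j hj.1 hj.2 (B j \ E) (Finset.sdiff_subset)
  have hpow : (0 : ℝ) < 2 ^ i := by positivity
  have hwK : (0 : ℝ) < w * K := by positivity
  -- N * 2^i ≥ wK/2
  have hN2 : w * K / 2 ≤ (N : ℝ) * 2 ^ i := by
    have : w * K / 2 ^ (i + 1) * 2 ^ i ≤ (N : ℝ) * 2 ^ i :=
      mul_le_mul_of_nonneg_right hNlb (le_of_lt hpow)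
    calc w * K / 2 = w * K / 2 ^ (i + 1) * 2 ^ i := by
          rw [pow_succ]; field_simp
      _ ≤ (N : ℝ) * 2 ^ i := this
  have key : τ / 2 ^ i * ((2 : ℝ) ^ i - M / N) ≥ (1 - 4 * M / (w * K)) * τ := by
    rw [ge_iff_le]
    have h1 : τ / 2 ^ i * ((2 : ℝ) ^ i - M / N) = τ - τ * M / ((N : ℝ) * 2 ^ i) := by
      field_simp
    rw [h1]
    have h2 : τ * M / ((N : ℝ) * 2 ^ i) ≤ τ * M / (w * K / 2) := by
      apply div_le_div_of_nonneg_left (by positivity) (by positivity) hN2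
    have h3 : τ * M / (w * K / 2) = 2 * M / (w * K) * τ := by field_simp
    have h4 : 2 * M / (w * K) * τ ≤ 4 * M / (w * K) * τ := by
      gcongr <;> linarith
    nlinarith
  calc (1 - 4 * M / (w * K)) * τ ≤ τ / 2 ^ i * ((2 : ℝ) ^ i - M / N) := key
    _ ≤ τ / 2 ^ i * (∑ e ∈ B j \ E, c e) := by
        apply mul_le_mul_of_nonneg_left hcost (by positivity)
    _ ≤ f (B j \ E) := hf
end
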